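/- Let X be a real Banach space and let A : X ⇉ X* be ultramaximally monotone. Then A is of type (NA): for every (x, x*) ∈ (X × X*) \ gra A there exists (a, a*) ∈ gra A with a ≠ x, a* ≠ x*, and ⟨x − a, x* − a*⟩ = −‖x − a‖·‖x* − a*‖. -/

import Mathlib

open Pointwise Set NormedSpace

variable {X : Type*} [NormedAddCommGroup X] [NormedSpace ℝ X]

/-- A set-valued operator `A : X ⇉ X*`, identified with its graph, is monotone. -/
def IsMonotoneOp (A : Set (X × StrongDual ℝ X)) : Prop :=
  ∀ p ∈ A, ∀ q ∈ A, 0 ≤ (p.2 - q.2) (p.1 - q.1)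

/-- `A` is maximally monotone: monotone and every monotonically related pair belongs to it. -/
def IsMaxMonotone (A : Set (X × StrongDual ℝ X)) : Prop :=
  IsMonotoneOp A ∧
    ∀ (x : X) (xs : StrongDual ℝ X), (∀ p ∈ A, 0 ≤ (xs - p.2) (x - p.1)) → (x, xs) ∈ A

/-- `A` is ultramaximally monotone: monotone, and maximally monotone with respect to
`X** × X*`. -/
def IsUltraMaxMonotone (A : Set (X × StrongDual ℝ X)) : Prop :=
  IsMonotoneOp A ∧
    ∀ (xss : StrongDual ℝ (StrongDual ℝ X)) (xs : StrongDual ℝ X),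
      (∀ p ∈ A, 0 ≤ (xss - inclusionInDoubleDual ℝ X p.1) (xs - p.2)) →
      ∃ x : X, xss = inclusionInDoubleDual ℝ X x ∧ (x, xs) ∈ A

/-- `A` is maximally monotone of type (NI): for every `(x**, x*)`,
`inf_{(a,a*) ∈ gra A} ⟨x* − a*, x** − â⟩ ≤ 0`. -/
def IsTypeNI (A : Set (X × StrongDual ℝ X)) : Prop :=
  IsMaxMonotone A ∧
    ∀ (xss : StrongDual ℝ (StrongDual ℝ X)) (xs : StrongDual ℝ X) (ε : ℝ), 0 < ε →
      ∃ p ∈ A, (xss - inclusionInDoubleDual ℝ X p.1) (xs - p.2) < ε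

def domOp (A : Set (X × StrongDual ℝ X)) : Set X := {x | ∃ xs, (x, xs) ∈ A}

def ranOp (A : Set (X × StrongDual ℝ X)) : Set (StrongDual ℝ X) := {xs | ∃ x, (x, xs) ∈ A}

/-- The sum `A + B`: `gra (A+B) = {(x, a* + b*) : (x,a*) ∈ gra A, (x,b*) ∈ gra B}`. -/
def sumOp (A B : Set (X × StrongDual ℝ X)) : Set (X × StrongDual ℝ X) :=
  {p | ∃ as bs, (p.1, as) ∈ A ∧ (p.1, bs) ∈ B ∧ p.2 = as + bs}

/-- The Fitzpatrick function `F_A(x, x*) = sup_{(a,a*) ∈ gra A} (⟨x,a*⟩ + ⟨a,x*⟩ − ⟨a,a*⟩)`. -/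
noncomputable def fitz (A : Set (X × StrongDual ℝ X)) : X × StrongDual ℝ X → EReal :=
  fun q => ⨆ p : A, ((p.1.2 q.1 + q.2 p.1.1 - p.1.2 p.1.1 : ℝ) : EReal)

/-- The extended Fitzpatrick function
`Φ_A(x**, x*) = sup_{(a,a*) ∈ gra A} (⟨a*,x**⟩ + ⟨a,x*⟩ − ⟨a,a*⟩)` on `X** × X*`. -/
noncomputable def phiFitz (A : Set (X × StrongDual ℝ X)) : StrongDual ℝ (StrongDual ℝ X) × StrongDual ℝ X → EReal :=
  fun q => ⨆ p : A, ((q.1 p.1.2 + q.2 p.1.1 - p.1.2 p.1.1 : ℝ) : EReal)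

/-- The Fenchel conjugate of the Fitzpatrick function,
`F_A*(x*, x**) = sup_{(y,y*)} (⟨y,x*⟩ + ⟨y*,x**⟩ − F_A(y,y*))`. -/
noncomputable def fitzConj (A : Set (X × StrongDual ℝ X)) :
    StrongDual ℝ X × StrongDual ℝ (StrongDual ℝ X) → EReal :=
  fun r => ⨆ q : X × StrongDual ℝ X, (((r.1 q.1 + r.2 q.2 : ℝ) : EReal) - fitz A q)


/-- `A` is maximally monotone of type (FPV). -/
def IsFPV (A : Set (X × StrongDual ℝ X)) : Prop :=
  IsMaxMonotone A ∧
    ∀ U : Set X, IsOpen U → Convex ℝ U → (U ∩ domOp A).Nonempty →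
      ∀ x ∈ U, ∀ xs : StrongDual ℝ X,
        (∀ p ∈ A, p.1 ∈ U → 0 ≤ (xs - p.2) (x - p.1)) → (x, xs) ∈ A

/-- `A` is rectangular: `dom A × ran A ⊆ dom F_A`. -/
def IsRectangular (A : Set (X × StrongDual ℝ X)) : Prop :=
  (domOp A) ×ˢ (ranOp A) ⊆ {q : X × StrongDual ℝ X | fitz A q < ⊤}

/-- The graph of the duality map `J x = {x* : ⟨x,x*⟩ = ‖x‖² and ‖x*‖ = ‖x‖}`. -/
def dualityMapGraph : Set (X × StrongDual ℝ X) :=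
  {p | p.2 p.1 = ‖p.1‖ ^ 2 ∧ ‖p.2‖ = ‖p.1‖}

/-- The partial inf-convolution `(F₁ □₂ F₂)(x, x*) = inf_{v*} (F₁(x, x* − v*) + F₂(x, v*))`. -/
noncomputable def infConv2 (F1 F2 : X × StrongDual ℝ X → EReal) : X × StrongDual ℝ X → EReal :=
  fun q => ⨅ v : StrongDual ℝ X, (F1 (q.1, q.2 - v) + F2 (q.1, v))

/-!
After translating `(x, x*)` to the origin it suffices to find `(a, a*) ∈ gra A` with `a ≠ 0`,
`a* ≠ 0` and `⟨a, a*⟩ = -‖a‖‖a*‖`. Maximality gives `F_A(y, y*) ≥ ⟨y, y*⟩ ≥ -(‖y‖² + ‖y*‖²)/2`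
for the Fitzpatrick function `F_A`, so Hahn–Banach puts an affine function between the two. Its
linear part is a pair `(z*, z**) ∈ X* × X**` with
`⟨a, z*⟩ + ⟨a*, z**⟩ - ⟨a, a*⟩ ≤ -(‖z*‖² + ‖z**‖²)/2` on `gra A`, which makes `(z**, z*)`
monotonically related to `A`. Ultramaximality gives `z** = û` with `(u, z*) ∈ gra A`, and the
inequality at `(u, z*)` forces `‖u‖ = ‖z*‖` and `⟨u, z*⟩ = -‖u‖‖z*‖`; neither vanishes since
`(0, 0) ∉ gra A`.
-/

section Sandwich

variable {E : Type*} [NormedAddCommGroup E] [NormedSpace ℝ E]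

theorem exists_affine_between_of_concaveOn {φ : E → ℝ} (hφc : ConcaveOn ℝ univ φ)
    (hφ : Continuous φ) {S : Set (E × ℝ)} (hS : Convex ℝ S) (hSne : S.Nonempty)
    (hφS : ∀ q ∈ S, φ q.1 ≤ q.2) :
    ∃ (z : StrongDual ℝ E) (d : ℝ), (∀ e, φ e ≤ z e + d) ∧ ∀ q ∈ S, z q.1 + d ≤ q.2 := by
  have hU : Convex ℝ {q : E × ℝ | q.2 < φ q.1} := by
    simpa using hφc.convex_strict_hypograph
  have hUo : IsOpen {q : E × ℝ | q.2 < φ q.1} := isOpen_lt continuous_snd (hφ.comp continuous_fst)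
  have hdisj : Disjoint {q : E × ℝ | q.2 < φ q.1} S :=
    Set.disjoint_left.2 fun q hqU hqS => (hφS q hqS).not_gt hqU
  obtain ⟨ψ, c, hψU, hψS⟩ := geometric_hahn_banach_open hU hUo hS hdisj
  set z₀ := ψ.comp (ContinuousLinearMap.inl ℝ E ℝ)
  set β := ψ (0, 1)
  have hψ : ∀ e t, ψ (e, t) = z₀ e + t * β := fun e t => by
    rw [← smul_eq_mul, ← map_smul, ContinuousLinearMap.comp_apply, ← map_add]
    simp
  have hU' : ∀ e t, t < φ e → z₀ e + t * β < c := fun e t ht => hψ e t ▸ hψU (e, t) ht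
  have hS' : ∀ q ∈ S, c ≤ z₀ q.1 + q.2 * β := fun q hq => hψ q.1 q.2 ▸ hψS q hq
  -- `ψ` separates a point of `S` from a point below it in the same fibre, so `β > 0`.
  have hβ : 0 < β := by
    obtain ⟨s, hs⟩ := hSne
    have h₁ := hU' s.1 (φ s.1 - 1) (by linarith)
    have h₂ := hS' s hs
    have h₃ := hφS s hs
    have hpos : 0 < (s.2 - (φ s.1 - 1)) * β := by linarith
    exact (pos_iff_pos_of_mul_pos hpos).1 (by linarith)
  refine ⟨-β⁻¹ • z₀, c / β, fun e => ?_, fun q hq => ?_⟩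
  · by_contra! h
    have := hU' e _ h
    simp only [FunLike.coe_smul, Pi.smul_apply, smul_eq_mul] at this
    field_simp at this
    linarith
  · have := hS' q hq
    simp only [FunLike.coe_smul, Pi.smul_apply, smul_eq_mul]
    field_simp
    linarith

end Sandwich

section HalfSquareNorm

variable {E F : Type*} [NormedAddCommGroup E] [NormedSpace ℝ E]
  [NormedAddCommGroup F] [NormedSpace ℝ F]

theorem neg_half_sq_norm_add_le_apply (f : StrongDual ℝ E) (y : E) :
    -(‖y‖ ^ 2 / 2 + ‖f‖ ^ 2 / 2) ≤ f y := by
  have h₁ : |f y| ≤ ‖f‖ * ‖y‖ := f.le_opNorm y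
  nlinarith [neg_abs_le (f y), sq_nonneg (‖f‖ - ‖y‖)]

theorem apply_eq_neg_norm_mul_of_apply_le {f : StrongDual ℝ E} {y : E}
    (h : f y ≤ -(‖y‖ ^ 2 / 2 + ‖f‖ ^ 2 / 2)) : ‖f‖ = ‖y‖ ∧ f y = -(‖y‖ * ‖f‖) := by
  have h₁ : |f y| ≤ ‖f‖ * ‖y‖ := f.le_opNorm y
  have h₂ := neg_abs_le (f y)
  have hnorm : ‖f‖ = ‖y‖ := by nlinarith [sq_nonneg (‖f‖ - ‖y‖)]
  refine ⟨hnorm, ?_⟩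
  rw [hnorm] at h h₁ ⊢
  nlinarith

-- `‖·‖² / 2` is its own Fenchel conjugate.
theorem half_sq_opNorm_le_of_forall_apply_sub_le (f : StrongDual ℝ E) {c : ℝ}
    (h : ∀ y, f y - ‖y‖ ^ 2 / 2 ≤ c) : ‖f‖ ^ 2 / 2 ≤ c := by
  have hc : 0 ≤ c := by simpa using h 0
  have hbound : ∀ y, (f y) ^ 2 ≤ 2 * c * ‖y‖ ^ 2 := by
    intro y
    rcases eq_or_ne y 0 with rfl | hy
    · simp
    have hy' : 0 < ‖y‖ ^ 2 := by positivity
    have := h ((f y / ‖y‖ ^ 2) • y)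
    rw [map_smul, smul_eq_mul, norm_smul, mul_pow, Real.norm_eq_abs, sq_abs] at this
    field_simp at this
    nlinarith
  have hf : ‖f‖ ≤ √(2 * c) := by
    refine f.opNorm_le_bound (Real.sqrt_nonneg _) fun y => ?_
    rw [← Real.sqrt_sq (norm_nonneg (f y)), ← Real.sqrt_sq (norm_nonneg y),
      ← Real.sqrt_mul (by positivity)]
    exact Real.sqrt_le_sqrt (by simpa [Real.norm_eq_abs, sq_abs] using hbound y)
  have := pow_le_pow_left₀ (norm_nonneg f) hf 2
  rw [Real.sq_sqrt (by positivity)] at this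
  linarith

theorem half_sq_opNorm_add_le_of_forall_apply_add_apply_sub_le (f : StrongDual ℝ E)
    (g : StrongDual ℝ F) {c : ℝ} (h : ∀ y w, f y + g w - (‖y‖ ^ 2 / 2 + ‖w‖ ^ 2 / 2) ≤ c) :
    ‖f‖ ^ 2 / 2 + ‖g‖ ^ 2 / 2 ≤ c := by
  have hg : ‖g‖ ^ 2 / 2 ≤ c - ‖f‖ ^ 2 / 2 := by
    refine half_sq_opNorm_le_of_forall_apply_sub_le g fun w => ?_
    have := half_sq_opNorm_le_of_forall_apply_sub_le f (c := c - (g w - ‖w‖ ^ 2 / 2))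
      fun y => by linarith [h y w]
    linarith
  linarith

theorem convexOn_univ_sq_norm : ConvexOn ℝ univ (fun x : E => ‖x‖ ^ 2) :=
  (convexOn_norm convex_univ).pow (fun _ _ => norm_nonneg _) 2

theorem convexOn_univ_half_sq_norm_add_half_sq_norm :
    ConvexOn ℝ univ (fun e : E × F => ‖e.1‖ ^ 2 / 2 + ‖e.2‖ ^ 2 / 2) := by
  have h₁ := convexOn_univ_sq_norm.comp_linearMap (LinearMap.fst ℝ E F)
  have h₂ := convexOn_univ_sq_norm.comp_linearMap (LinearMap.snd ℝ E F)
  rw [preimage_univ] at h₁ h₂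
  refine ((h₁.add h₂).smul (c := (2⁻¹ : ℝ)) (by norm_num)).congr fun e _ => ?_
  simp only [Pi.add_apply, Function.comp_apply, LinearMap.fst_apply, LinearMap.snd_apply,
    smul_eq_mul]
  ring

end HalfSquareNorm

section Monotone

variable {A : Set (X × StrongDual ℝ X)}

/-- The epigraph of the Fitzpatrick function `fitz A`, as a subset of `(X × X*) × ℝ`. -/
def fitzEpigraph (A : Set (X × StrongDual ℝ X)) : Set ((X × StrongDual ℝ X) × ℝ) :=
  {q | ∀ p ∈ A, p.2 q.1.1 + q.1.2 p.1 - p.2 p.1 ≤ q.2}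

theorem convex_fitzEpigraph (A : Set (X × StrongDual ℝ X)) : Convex ℝ (fitzEpigraph A) := by
  refine convex_iff_forall_pos.2 fun q hq r hr a b ha hb hab p hp => ?_
  have h₁ := mul_le_mul_of_nonneg_left (hq p hp) ha.le
  have h₂ := mul_le_mul_of_nonneg_left (hr p hp) hb.le
  have h₃ : p.2 p.1 = a * p.2 p.1 + b * p.2 p.1 := by rw [← add_mul, hab, one_mul]
  simp only [Prod.fst_add, Prod.snd_add, Prod.smul_fst, Prod.smul_snd, map_add, map_smul,
    smul_eq_mul, add_apply, FunLike.coe_smul, Pi.smul_apply]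
  linarith

theorem IsMonotoneOp.mk_apply_mem_fitzEpigraph (hA : IsMonotoneOp A) {p : X × StrongDual ℝ X}
    (hp : p ∈ A) : (p, p.2 p.1) ∈ fitzEpigraph A := fun q hq => by
  have := hA p hp q hq
  simp only [sub_apply, map_sub] at this
  linarith

theorem IsMaxMonotone.apply_le_of_mem_fitzEpigraph (hA : IsMaxMonotone A)
    {q : (X × StrongDual ℝ X) × ℝ} (hq : q ∈ fitzEpigraph A) : q.1.2 q.1.1 ≤ q.2 := by
  by_cases hrel : ∀ p ∈ A, 0 ≤ (q.1.2 - p.2) (q.1.1 - p.1)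
  · simpa using hq _ (hA.2 _ _ hrel)
  · push Not at hrel
    obtain ⟨p, hp, hlt⟩ := hrel
    simp only [sub_apply, map_sub] at hlt
    linarith [hq p hp]

theorem IsMaxMonotone.exists_dual_pair_le_neg_half_sq_norm (hA : IsMaxMonotone A)
    (hne : A.Nonempty) :
    ∃ (zs : StrongDual ℝ X) (zss : StrongDual ℝ (StrongDual ℝ X)),
      ∀ p ∈ A, zs p.1 + zss p.2 - p.2 p.1 ≤ -(‖zs‖ ^ 2 / 2 + ‖zss‖ ^ 2 / 2) := by
  obtain ⟨p₀, hp₀⟩ := hne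
  have hφ : ConcaveOn ℝ univ fun e : X × StrongDual ℝ X => -(‖e.1‖ ^ 2 / 2 + ‖e.2‖ ^ 2 / 2) :=
    convexOn_univ_half_sq_norm_add_half_sq_norm.neg
  have hφS : ∀ q ∈ fitzEpigraph A, -(‖q.1.1‖ ^ 2 / 2 + ‖q.1.2‖ ^ 2 / 2) ≤ q.2 := fun q hq =>
    (neg_half_sq_norm_add_le_apply q.1.2 q.1.1).trans (hA.apply_le_of_mem_fitzEpigraph hq)
  obtain ⟨z, d, hz, hzA⟩ := exists_affine_between_of_concaveOn hφ (by fun_prop)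
    (convex_fitzEpigraph A) ⟨_, hA.1.mk_apply_mem_fitzEpigraph hp₀⟩ hφS
  set zs := z.comp (ContinuousLinearMap.inl ℝ X (StrongDual ℝ X))
  set zss := z.comp (ContinuousLinearMap.inr ℝ X (StrongDual ℝ X))
  have hsplit : ∀ y ys, z (y, ys) = zs y + zss ys := fun y ys => by
    change z (y, ys) = z (y, 0) + z (0, ys)
    rw [← map_add, Prod.mk_add_mk, add_zero, zero_add]
  have hnorm : ‖zs‖ ^ 2 / 2 + ‖zss‖ ^ 2 / 2 ≤ d := by
    simpa using half_sq_opNorm_add_le_of_forall_apply_add_apply_sub_le (-zs) (-zss)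
      fun y ys => by simp only [neg_apply]; linarith [hz (y, ys), hsplit y ys]
  refine ⟨zs, zss, fun p hp => ?_⟩
  have := hzA _ (hA.1.mk_apply_mem_fitzEpigraph hp)
  rw [← hsplit]
  linarith

end Monotone

section UltraMaximal

variable {A : Set (X × StrongDual ℝ X)}

theorem IsUltraMaxMonotone.isMaxMonotone (hA : IsUltraMaxMonotone A) : IsMaxMonotone A := by
  refine ⟨hA.1, fun y ys hrel => ?_⟩
  obtain ⟨u, hu, huA⟩ := hA.2 (inclusionInDoubleDual ℝ X y) ys fun p hp => by
    have := hrel p hp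
    simp only [sub_apply, dual_def, map_sub] at this ⊢
    linarith
  rwa [(inclusionInDoubleDualLi ℝ).injective hu]

theorem IsUltraMaxMonotone.nonempty (hA : IsUltraMaxMonotone A) : A.Nonempty := by
  rw [nonempty_iff_ne_empty]
  rintro rfl
  obtain ⟨_, -, h⟩ := hA.2 0 0 fun _ hp => hp.elim
  exact h

theorem IsUltraMaxMonotone.preimage_add (hA : IsUltraMaxMonotone A) (c : X × StrongDual ℝ X) :
    IsUltraMaxMonotone ((· + c) ⁻¹' A) := by
  refine ⟨fun p hp q hq => by simpa using hA.1 _ hp _ hq, fun xss xs hrel => ?_⟩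
  obtain ⟨u, hu, huA⟩ := hA.2 (xss + inclusionInDoubleDual ℝ X c.1) (xs + c.2) fun p hp => by
    convert hrel (p - c) (by simpa using hp) using 2 <;> simp [map_sub] <;> abel
  exact ⟨u - c.1, by rw [map_sub, ← hu, add_sub_cancel_right], by
    show (u - c.1, xs) + (c.1, c.2) ∈ A
    rwa [Prod.mk_add_mk, sub_add_cancel]⟩

theorem IsUltraMaxMonotone.exists_apply_eq_neg_norm_mul (hA : IsUltraMaxMonotone A)
    (h0 : (0, 0) ∉ A) : ∃ p ∈ A, p.1 ≠ 0 ∧ p.2 ≠ 0 ∧ p.2 p.1 = -(‖p.1‖ * ‖p.2‖) := by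
  obtain ⟨zs, zss, hz⟩ :=
    hA.isMaxMonotone.exists_dual_pair_le_neg_half_sq_norm hA.nonempty
  have hrel : ∀ p ∈ A, 0 ≤ (zss - inclusionInDoubleDual ℝ X p.1) (zs - p.2) := fun p hp => by
    simp only [sub_apply, map_sub, dual_def]
    linarith [hz p hp, neg_half_sq_norm_add_le_apply zss zs]
  obtain ⟨u, rfl, hu⟩ := hA.2 zss zs hrel
  have hle : zs u ≤ -(‖u‖ ^ 2 / 2 + ‖zs‖ ^ 2 / 2) := by
    have := hz _ hu
    have hnorm : ‖inclusionInDoubleDual ℝ X u‖ = ‖u‖ := (inclusionInDoubleDualLi ℝ).norm_map u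
    rw [dual_def, hnorm] at this
    linarith
  obtain ⟨hnorm, hval⟩ := apply_eq_neg_norm_mul_of_apply_le hle
  refine ⟨(u, zs), hu, fun (hu₀ : u = 0) => h0 ?_, fun (hzs₀ : zs = 0) => h0 ?_, hval⟩
  · rwa [← norm_eq_zero.1 (hnorm.trans (norm_eq_zero.2 hu₀)), ← hu₀]
  · rwa [← norm_eq_zero.1 (hnorm.symm.trans (norm_eq_zero.2 hzs₀)), ← hzs₀]

end UltraMaximal

theorem stmt12_general (A : Set (X × StrongDual ℝ X)) (hA : IsUltraMaxMonotone A) :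
    ∀ (x : X) (xs : StrongDual ℝ X), (x, xs) ∉ A →
      ∃ p ∈ A, p.1 ≠ x ∧ p.2 ≠ xs ∧
        (xs - p.2) (x - p.1) = -(‖x - p.1‖ * ‖xs - p.2‖) := by
  intro x xs hx
  obtain ⟨q, hq, hq₁, hq₂, hval⟩ :=
    (hA.preimage_add (x, xs)).exists_apply_eq_neg_norm_mul (by simpa using hx)
  refine ⟨q + (x, xs), hq, by simpa using hq₁, by simpa using hq₂, ?_⟩
  have h₁ : x - (q + (x, xs)).1 = -q.1 := by simp
  have h₂ : xs - (q + (x, xs)).2 = -q.2 := by simp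
  rwa [h₁, h₂, map_neg, neg_apply, neg_neg, norm_neg, norm_neg]

theorem stmt12 [CompleteSpace X] (A : Set (X × StrongDual ℝ X)) (hA : IsUltraMaxMonotone A) :
    ∀ (x : X) (xs : StrongDual ℝ X), (x, xs) ∉ A →
      ∃ p ∈ A, p.1 ≠ x ∧ p.2 ≠ xs ∧
        (xs - p.2) (x - p.1) = -(‖x - p.1‖ * ‖xs - p.2‖) :=
  stmt12_general A hA
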